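/- Consider the Heisenberg-type Lie algebra Bia(II) subtype (1) with brackets [e₁,e₂]=0, [e₂,e₃]=e₁, [e₃,e₁]=0, metric g=diag(1,-1,1), almost contact structure φe₁=e₂, φe₂=-e₁, φe₃=0, ξ=e₃, η(x)=x₃. Then the tensor F(x,y,z) = g((∇_xφ)y, z), where ∇ is the Levi-Civita connection, has nonzero components (up to the symmetry F(x,y,z)=F(x,z,y)) determined by F₁₁₃ = F₁₃₁ = -1/2, F₂₂₃ = F₂₃₂ = 1/2, F₃₁₁ = F₃₂₂ = -1. -/

import Mathlib

noncomputable section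

def e (i : Fin 3) : Fin 3 → ℝ := Pi.single i 1

def gB (x y : Fin 3 → ℝ) : ℝ := x 0 * y 0 - x 1 * y 1 + x 2 * y 2

/-- The almost contact endomorphism φ: φe₁ = e₂, φe₂ = -e₁, φe₃ = 0. -/
def phiF (x : Fin 3 → ℝ) : Fin 3 → ℝ := ![-(x 1), x 0, 0]

/-- The Lie bracket of Bia(II), subtype (1):
[e₁,e₂]=0, [e₂,e₃]=e₁, [e₃,e₁]=0 (bilinear extension). -/
def brII (x y : Fin 3 → ℝ) : Fin 3 → ℝ :=
  ![x 1 * y 2 - x 2 * y 1, 0, 0]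

/-- The structure tensor F(eᵢ,eⱼ,eₖ) = g((∇_{eᵢ}φ)eⱼ, eₖ). -/
def Ften (nabla : (Fin 3 → ℝ) →ₗ[ℝ] (Fin 3 → ℝ) →ₗ[ℝ] (Fin 3 → ℝ))
    (i j k : Fin 3) : ℝ :=
  gB (nabla (e i) (phiF (e j)) - phiF (nabla (e i) (e j))) (e k)

/-- The Levi-Civita connection values ∇_{eᵢ}eⱼ. -/
def Nmat : Fin 3 → Fin 3 → (Fin 3 → ℝ) :=
  ![![![0,0,0], ![0,0,-(1/2)], ![0,-(1/2),0]],
    ![![0,0,-(1/2)], ![0,0,0], ![1/2,0,0]],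
    ![![0,-(1/2),0], ![-(1/2),0,0], ![0,0,0]]]

/-- The expected values of F. -/
def Fval : Fin 3 → Fin 3 → Fin 3 → ℝ :=
  ![![![0,0,-(1/2)], ![0,0,0], ![-(1/2),0,0]],
    ![![0,0,0], ![0,0,1/2], ![0,1/2,0]],
    ![![-1,0,0], ![0,-1,0], ![0,0,0]]]

set_option maxHeartbeats 1600000 in
/-- for Bia(II), subtype (1), with the Levi-Civita connection of
g = diag(1,-1,1), the nonzero components of F are exactly
F₁₁₃ = F₁₃₁ = -1/2, F₂₂₃ = F₂₃₂ = 1/2, F₃₁₁ = F₃₂₂ = -1. -/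
theorem stmt19
    (nabla : (Fin 3 → ℝ) →ₗ[ℝ] (Fin 3 → ℝ) →ₗ[ℝ] (Fin 3 → ℝ))
    (hK : ∀ i j k : Fin 3,
      2 * gB (nabla (e i) (e j)) (e k) =
        gB (brII (e i) (e j)) (e k) + gB (brII (e k) (e i)) (e j)
          + gB (brII (e k) (e j)) (e i)) :
    Ften nabla 0 0 2 = -(1 / 2) ∧ Ften nabla 0 2 0 = -(1 / 2) ∧
    Ften nabla 1 1 2 = 1 / 2 ∧ Ften nabla 1 2 1 = 1 / 2 ∧
    Ften nabla 2 0 0 = -1 ∧ Ften nabla 2 1 1 = -1 ∧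
    (∀ i j k : Fin 3,
      (i, j, k) ∉ ({(0, 0, 2), (0, 2, 0), (1, 1, 2), (1, 2, 1), (2, 0, 0), (2, 1, 1)} :
        Set (Fin 3 × Fin 3 × Fin 3)) → Ften nabla i j k = 0) := by
  have hN : ∀ i j, nabla (e i) (e j) = Nmat i j := by
    intro i j
    funext k
    have h := hK i j k
    fin_cases i <;> fin_cases j <;> fin_cases k <;>
      simp [gB, e, brII, Pi.single_apply, Nmat, Matrix.vecHead, Matrix.vecTail] at h ⊢ <;>
      linarith
  have hphi0 : phiF (e 0) = e 1 := by
    funext k; fin_cases k <;> simp [phiF, e, Pi.single_apply]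
  have hphi1 : phiF (e 1) = -(e 0) := by
    funext k; fin_cases k <;> simp [phiF, e, Pi.single_apply]
  have hphi2 : phiF (e 2) = (0 : Fin 3 → ℝ) := by
    funext k; fin_cases k <;> simp [phiF, e, Pi.single_apply]
  have hF0 : ∀ i k, Ften nabla i 0 k = gB (Nmat i 1 - phiF (Nmat i 0)) (e k) := by
    intro i k; rw [Ften, hphi0, hN, hN]
  have hF1 : ∀ i k, Ften nabla i 1 k = gB (-(Nmat i 0) - phiF (Nmat i 1)) (e k) := by
    intro i k; rw [Ften, hphi1, map_neg, hN, hN]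
  have hF2 : ∀ i k, Ften nabla i 2 k = gB (0 - phiF (Nmat i 2)) (e k) := by
    intro i k; rw [Ften, hphi2, map_zero, hN]
  have hF : ∀ i j k, Ften nabla i j k = Fval i j k := by
    intro i j k
    fin_cases j
    · show Ften nabla i 0 k = Fval i 0 k
      rw [hF0]
      fin_cases i <;> fin_cases k <;>
        norm_num [gB, phiF, Nmat, Fval, e, Pi.single_apply, Matrix.vecHead, Matrix.vecTail, Matrix.cons_val, Matrix.cons_val_two, Fin.ext_iff] <;>
        decide
    · show Ften nabla i 1 k = Fval i 1 k
      rw [hF1]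
      fin_cases i <;> fin_cases k <;>
        norm_num [gB, phiF, Nmat, Fval, e, Pi.single_apply, Matrix.vecHead, Matrix.vecTail, Matrix.cons_val, Matrix.cons_val_two, Fin.ext_iff] <;>
        decide
    · show Ften nabla i 2 k = Fval i 2 k
      rw [hF2]
      fin_cases i <;> fin_cases k <;>
        norm_num [gB, phiF, Nmat, Fval, e, Pi.single_apply, Matrix.vecHead, Matrix.vecTail, Matrix.cons_val, Matrix.cons_val_two, Fin.ext_iff] <;>
        decide
  refine ⟨?_, ?_, ?_, ?_, ?_, ?_, ?_⟩
  · rw [hF]; norm_num [Fval, Matrix.vecHead, Matrix.vecTail, Matrix.cons_val, Matrix.cons_val_two, Fin.ext_iff]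
  · rw [hF]; norm_num [Fval, Matrix.vecHead, Matrix.vecTail, Matrix.cons_val, Matrix.cons_val_two, Fin.ext_iff]
  · rw [hF]; norm_num [Fval, Matrix.vecHead, Matrix.vecTail, Matrix.cons_val, Matrix.cons_val_two, Fin.ext_iff]
  · rw [hF]; norm_num [Fval, Matrix.vecHead, Matrix.vecTail, Matrix.cons_val, Matrix.cons_val_two, Fin.ext_iff]
  · rw [hF]; norm_num [Fval, Matrix.vecHead, Matrix.vecTail, Matrix.cons_val, Matrix.cons_val_two, Fin.ext_iff]
  · rw [hF]; norm_num [Fval, Matrix.vecHead, Matrix.vecTail, Matrix.cons_val, Matrix.cons_val_two, Fin.ext_iff]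
  · intro i j k hmem
    rw [hF]
    simp only [Set.mem_insert_iff, Set.mem_singleton_iff, Prod.mk.injEq, not_or] at hmem
    fin_cases i <;> fin_cases j <;> fin_cases k <;>
      first
        | exact absurd hmem (by decide)
        | (norm_num [Fval, Matrix.vecHead, Matrix.vecTail, Matrix.cons_val, Matrix.cons_val_two, Fin.ext_iff] <;> decide)
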